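/- Sublinear nonlinearities give λ* = +∞: Under the standing assumptions, let f ∈ C¹([0,∞)) be non-decreasing with f(0) > 0, and assume that for every n ∈ ℕ there exists s_n ≥ 0 with f(s_n) ≤ s_n/n. Then for every λ > 0 the problem (P(λf)) admits a bounded solution; i.e., the extremal parameter λ* = +∞. -/

import Mathlib

open MeasureTheory Set

/-- The `m`-boundary of a set `Ω`. -/
def mBoundary {X : Type*} [MeasurableSpace X] (m : X → MeasureTheory.Measure X)
    (Ω : Set X) : Set X :=
  {x | x ∉ Ω ∧ 0 < m x Ω}

/-- The `m`-closure of a set `Ω`. -/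
def mClosure {X : Type*} [MeasurableSpace X] (m : X → MeasureTheory.Measure X)
    (Ω : Set X) : Set X :=
  Ω ∪ mBoundary m Ω

/-- The nonlocal `m`-Laplacian. -/
noncomputable def deltaM {X : Type*} [MeasurableSpace X] (m : X → MeasureTheory.Measure X)
    (u : X → ℝ) (x : X) : ℝ :=
  ∫ y, (u y - u x) ∂(m x)

/-- `m` is a random walk: each `m x` is a probability measure and `x ↦ m x A` is measurable. -/
def IsRandomWalk {X : Type*} [MeasurableSpace X] (m : X → MeasureTheory.Measure X) : Prop :=
  (∀ x, IsProbabilityMeasure (m x)) ∧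
    ∀ A : Set X, MeasurableSet A → Measurable fun x => m x A

/-- `ν` is reversible with respect to the random walk `m`. -/
def Reversible {X : Type*} [MeasurableSpace X] (m : X → MeasureTheory.Measure X)
    (ν : MeasureTheory.Measure X) : Prop :=
  ∀ F : X → X → ℝ, Measurable (Function.uncurry F) → (∃ C, ∀ x y, |F x y| ≤ C) →
    ∫ x, (∫ y, F x y ∂(m x)) ∂ν = ∫ x, (∫ y, F y x ∂(m x)) ∂ν

/-- `Ω` is `m`-connected with respect to `ν`. -/
def mConnected {X : Type*} [MeasurableSpace X] (m : X → MeasureTheory.Measure X)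
    (ν : MeasureTheory.Measure X) (Ω : Set X) : Prop :=
  ∀ A B : Set X, MeasurableSet A → MeasurableSet B → A ⊆ Ω → B ⊆ Ω → A ∪ B = Ω →
    ν A ≠ 0 → ν B ≠ 0 → 0 < ∫ x in A, (m x B).toReal ∂ν

/-- Membership in `L²₀(Ω_m, ν)`: square integrable on `Ω_m`, vanishing `ν`-a.e. on the
`m`-boundary, extended by `0` outside `Ω_m`. -/
def MemL20 {X : Type*} [MeasurableSpace X] (m : X → MeasureTheory.Measure X)
    (ν : MeasureTheory.Measure X) (Ω : Set X) (u : X → ℝ) : Prop :=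
  Measurable u ∧ MeasureTheory.MemLp u 2 (ν.restrict (mClosure m Ω)) ∧
    (∀ᵐ x ∂(ν.restrict (mBoundary m Ω)), u x = 0) ∧ ∀ x ∉ mClosure m Ω, u x = 0

/-- The nonlocal Dirichlet energy `(1/2)∬_{Ω_m×Ω_m} |u(y)-u(x)|² dm_x(y) dν(x)`. -/
noncomputable def gradEnergy {X : Type*} [MeasurableSpace X] (m : X → MeasureTheory.Measure X)
    (ν : MeasureTheory.Measure X) (Ω : Set X) (u : X → ℝ) : ℝ :=
  (1 / 2) * ∫ x in mClosure m Ω, (∫ y in mClosure m Ω, (u y - u x) ^ 2 ∂(m x)) ∂ν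

/-- The standing assumptions of the paper: reversible random walk space, `Ω` `m`-connected with
`0 < ν(Ω) < ν(Ω_m) < ∞`, a 2-Poincaré inequality with first eigenvalue `lam = λ_m(Ω)` attained
by an eigenfunction `φ` with `0 < α ≤ φ ≤ M` a.e. on `Ω` and `φ = 0` on `∂_mΩ`. -/
structure Standing {X : Type*} [MeasurableSpace X] (m : X → MeasureTheory.Measure X)
    (ν : MeasureTheory.Measure X) (Ω : Set X) (lam : ℝ) (φ : X → ℝ) (α M : ℝ) : Prop where
  hrw : IsRandomWalk m
  hrev : Reversible m ν
  hsigma : MeasureTheory.SigmaFinite ν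
  hmeasΩ : MeasurableSet Ω
  hconn : mConnected m ν Ω
  hpos : 0 < ν Ω
  hlt : ν Ω < ν (mClosure m Ω)
  hfin : ν (mClosure m Ω) < ⊤
  hlamPos : 0 < lam
  hpoincare : ∀ u : X → ℝ, MemL20 m ν Ω u →
    lam * ∫ x in Ω, u x ^ 2 ∂ν ≤ gradEnergy m ν Ω u
  hphiMem : MemL20 m ν Ω φ
  heig : ∀ᵐ x ∂(ν.restrict Ω), -(deltaM m φ x) = lam * φ x
  halphaPos : 0 < α
  halphaM : α ≤ M
  hphiLB : ∀ᵐ x ∂(ν.restrict Ω), α ≤ φ x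
  hphiUB : ∀ᵐ x ∂(ν.restrict Ω), φ x ≤ M

/-- Essential boundedness on a set `S` with respect to `ν`. -/
def IsBdd {X : Type*} [MeasurableSpace X] (ν : MeasureTheory.Measure X) (S : Set X)
    (u : X → ℝ) : Prop :=
  ∃ C : ℝ, ∀ᵐ x ∂(ν.restrict S), |u x| ≤ C

/-- A (nonnegative) solution of the Gelfand-type problem `(P(λ f))`. -/
def IsSol {X : Type*} [MeasurableSpace X] (m : X → MeasureTheory.Measure X)
    (ν : MeasureTheory.Measure X) (Ω : Set X) (lam : ℝ) (f : ℝ → ℝ) (u : X → ℝ) : Prop :=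
  MemL20 m ν Ω u ∧ (∀ᵐ x ∂(ν.restrict (mClosure m Ω)), 0 ≤ u x) ∧
    ∀ᵐ x ∂(ν.restrict Ω), -(deltaM m u x) = lam * f (u x)

/-- A solution of `(P(λ f))` without a sign constraint. -/
def IsSolNS {X : Type*} [MeasurableSpace X] (m : X → MeasureTheory.Measure X)
    (ν : MeasureTheory.Measure X) (Ω : Set X) (lam : ℝ) (f : ℝ → ℝ) (u : X → ℝ) : Prop :=
  MemL20 m ν Ω u ∧ ∀ᵐ x ∂(ν.restrict Ω), -(deltaM m u x) = lam * f (u x)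

/-- A minimal solution of `(P(λ f))`. -/
def IsMinimalSol {X : Type*} [MeasurableSpace X] (m : X → MeasureTheory.Measure X)
    (ν : MeasureTheory.Measure X) (Ω : Set X) (lam : ℝ) (f : ℝ → ℝ) (u : X → ℝ) : Prop :=
  IsSol m ν Ω lam f u ∧
    ∀ v : X → ℝ, IsSol m ν Ω lam f v → ∀ᵐ x ∂(ν.restrict (mClosure m Ω)), u x ≤ v x

/-- The extremal parameter `λ*`. -/
noncomputable def lamStar {X : Type*} [MeasurableSpace X] (m : X → MeasureTheory.Measure X)
    (ν : MeasureTheory.Measure X) (Ω : Set X) (f : ℝ → ℝ) : ℝ :=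
  sSup {lam : ℝ | 0 ≤ lam ∧ ∃ u : X → ℝ, IsSol m ν Ω lam f u ∧ IsBdd ν (mClosure m Ω) u}

/-- Hypotheses (H) on the nonlinearity `f` with constant `c₁`. -/
def HypH (f : ℝ → ℝ) (c₁ : ℝ) : Prop :=
  ContinuousOn f (Set.Ici 0) ∧ MonotoneOn f (Set.Ici 0) ∧ 0 < f 0 ∧ 0 < c₁ ∧
    ∀ s : ℝ, 0 ≤ s → c₁ * s ≤ f s

/-- The stability quadratic form `Q_u(v)` with linearized potential `fp ∘ u` (where `fp = f'`). -/
noncomputable def Qform {X : Type*} [MeasurableSpace X] (m : X → MeasureTheory.Measure X)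
    (ν : MeasureTheory.Measure X) (Ω : Set X) (lam : ℝ) (fp : ℝ → ℝ) (u v : X → ℝ) : ℝ :=
  gradEnergy m ν Ω v - lam * ∫ x in Ω, fp (u x) * v x ^ 2 ∂ν

/-- Stability of a solution: `Q_u(v) ≥ 0` for all test functions `v ∈ L^∞ ∩ L²₀`. -/
def IsStable {X : Type*} [MeasurableSpace X] (m : X → MeasureTheory.Measure X)
    (ν : MeasureTheory.Measure X) (Ω : Set X) (lam : ℝ) (fp : ℝ → ℝ) (u : X → ℝ) : Prop :=
  ∀ v : X → ℝ, MemL20 m ν Ω v → IsBdd ν (mClosure m Ω) v → 0 ≤ Qform m ν Ω lam fp u v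

/-- The first eigenvalue `μ₁(u)` of the linearized operator, as an infimum of `Q_u` over
normalized test functions. -/
noncomputable def mu1 {X : Type*} [MeasurableSpace X] (m : X → MeasureTheory.Measure X)
    (ν : MeasureTheory.Measure X) (Ω : Set X) (lam : ℝ) (fp : ℝ → ℝ) (u : X → ℝ) : ℝ :=
  sInf {r : ℝ | ∃ v : X → ℝ, MemL20 m ν Ω v ∧ (∫ x in Ω, v x ^ 2 ∂ν) = 1 ∧
    r = Qform m ν Ω lam fp u v}

/-!
Monotone iteration below a barrier. By sublinearity there is `s > 0` with
`λ M f(s) ≤ λ_m(Ω) α s`, and then `w = (s / M) φ_m` satisfies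
`-Δ_m w = λ_m(Ω) w ≥ λ_m(Ω) α s / M ≥ λ f(s) ≥ λ f(w)` on `Ω` with `0 ≤ w ≤ s`.
Starting from `0`, the iterates of `u ↦ ∫ u dm_x + λ f(u(x))` on `Ω` increase and stay below
`w`, so they converge to a solution with values in `[0, s]`. The comparison `u ≤ w` only holds
`ν`-a.e.; reversibility of `ν` turns it into `u ≤ w` `m_x`-a.e. for `ν`-a.e. `x ∈ Ω`, which is
what the next iteration step needs.
-/

open Filter Topology

section RandomWalk

variable {X : Type*} [MeasurableSpace X] {m : X → Measure X} {ν : Measure X}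

theorem IsRandomWalk.measurable_integral (hrw : IsRandomWalk m) {g : X → ℝ}
    (hg : Measurable g) : Measurable fun x ↦ ∫ y, g y ∂m x :=
  (hg.stronglyMeasurable.integral_kernel
    (κ := ⟨m, Measure.measurable_of_measurable_coe m hrw.2⟩)).measurable

theorem measurableSet_mBoundary (hrw : IsRandomWalk m) {Ω : Set X} (hΩ : MeasurableSet Ω) :
    MeasurableSet (mBoundary m Ω) :=
  hΩ.compl.inter (measurableSet_lt measurable_const (hrw.2 Ω hΩ))

/-- Reversibility gives `∫_S m_x(A) dν(x) = ∫_A m_x(S) dν(x)`, which vanishes when `A` is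
`ν`-null. -/
theorem Reversible.ae_restrict_measure_eq_zero (hrw : IsRandomWalk m) (hrev : Reversible m ν)
    {S A : Set X} (hS : MeasurableSet S) (hSfin : ν S ≠ ⊤) (hA : MeasurableSet A)
    (hA0 : ν A = 0) : ∀ᵐ x ∂ν.restrict S, m x A = 0 := by
  have := hrw.1
  have hF : Measurable
      (Function.uncurry fun x y ↦ S.indicator (1 : X → ℝ) x * A.indicator 1 y) :=
    ((measurable_const.indicator hS).comp measurable_fst).mul
      ((measurable_const.indicator hA).comp measurable_snd)
  have hsym := hrev _ hF ⟨1, fun x y ↦ by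
    by_cases hx : x ∈ S <;> by_cases hy : y ∈ A <;> simp [hx, hy]⟩
  simp only [integral_const_mul, integral_mul_const, integral_indicator_one hS,
    integral_indicator_one hA] at hsym
  have hint : ∫ x in S, (m x).real A ∂ν = 0 := by
    rw [← integral_indicator hS]
    calc _ = ∫ x, S.indicator 1 x * (m x).real A ∂ν := by
          congr 1 with x; by_cases hx : x ∈ S <;> simp [hx]
      _ = 0 := hsym.trans <| integral_eq_zero_of_ae <| by
          filter_upwards [measure_eq_zero_iff_ae_notMem.1 hA0] with x hx
          simp [hx]
  have : IsFiniteMeasure (ν.restrict S) := isFiniteMeasure_restrict.2 hSfin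
  have hbound : ∀ x, (m x).real A ∈ Icc (0 : ℝ) 1 :=
    fun x ↦ ⟨measureReal_nonneg, measureReal_le_one⟩
  filter_upwards [(integral_eq_zero_iff_of_nonneg (fun x ↦ (hbound x).1)
    (.of_mem_Icc 0 1 (hrw.2 A hA).ennreal_toReal.aemeasurable (ae_of_all _ hbound))).1 hint]
    with x hx
  exact (measureReal_eq_zero_iff (measure_ne_top _ _)).1 hx

theorem Reversible.ae_restrict_ae (hrw : IsRandomWalk m) (hrev : Reversible m ν) {S : Set X}
    (hS : MeasurableSet S) (hSfin : ν S ≠ ⊤) {P : X → Prop} (hP : ∀ᵐ y ∂ν, P y) :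
    ∀ᵐ x ∂ν.restrict S, ∀ᵐ y ∂m x, P y := by
  filter_upwards [hrev.ae_restrict_measure_eq_zero hrw hS hSfin (measurableSet_toMeasurable ν _)
    ((measure_toMeasurable _).trans (ae_iff.1 hP))] with x hx
  exact measure_mono_null (subset_toMeasurable _ _) hx

theorem deltaM_eq_integral_sub {x : X} [IsProbabilityMeasure (m x)] {u : X → ℝ}
    (hu : Integrable u (m x)) : deltaM m u x = ∫ y, u y ∂m x - u x := by
  simp [deltaM, integral_sub hu (integrable_const _)]

/-- The Bochner integral defining `deltaM` is `0` unless the integrand is integrable. -/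
theorem integrable_of_deltaM_ne_zero {x : X} [IsFiniteMeasure (m x)] {u : X → ℝ}
    (hu : deltaM m u x ≠ 0) : Integrable u (m x) := by
  have : Integrable (fun y ↦ u y - u x) (m x) := by
    by_contra h
    exact hu (integral_undef h)
  exact (this.add (integrable_const (u x))).congr (ae_of_all _ fun y ↦ by simp)

end RandomWalk

section Picard

variable {X : Type*} [MeasurableSpace X] {m : X → Measure X} {Ω : Set X}
  {l s : ℝ} {g : ℝ → ℝ}

/-- On `Ω`, `-Δ_m u = l g(u)` reads `u = picardMap m l g u`, since each `m x` is a probability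
measure. -/
noncomputable def picardMap (m : X → Measure X) (l : ℝ) (g : ℝ → ℝ) (U : X → ℝ) (x : X) : ℝ :=
  ∫ y, U y ∂m x + l * g (U x)

/-- The cap at `s` keeps every iterate bounded everywhere, not just almost everywhere. -/
noncomputable def cappedPicardMap (m : X → Measure X) (Ω : Set X) (l s : ℝ) (g : ℝ → ℝ)
    (U : X → ℝ) : X → ℝ :=
  Ω.indicator fun x ↦ min s (picardMap m l g U x)

noncomputable def picardIter (m : X → Measure X) (Ω : Set X) (l s : ℝ) (g : ℝ → ℝ) (k : ℕ) :
    X → ℝ :=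
  (cappedPicardMap m Ω l s g)^[k] 0

noncomputable def picardLimit (m : X → Measure X) (Ω : Set X) (l s : ℝ) (g : ℝ → ℝ) (x : X) :
    ℝ :=
  ⨆ k, picardIter m Ω l s g k x

theorem deltaM_eq_of_picardMap_eq {u : X → ℝ} {x : X} [IsProbabilityMeasure (m x)]
    (hu : Integrable u (m x)) (hfix : u x = picardMap m l g u x) :
    -deltaM m u x = l * g (u x) := by
  rw [deltaM_eq_integral_sub hu]
  rw [picardMap] at hfix
  linarith

theorem picardMap_le_of_ae_le (hl : 0 ≤ l) (hgm : Monotone g) {U w : X → ℝ}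
    (hU : Measurable U) (hUs : ∀ x, U x ∈ Icc 0 s) {x : X} [IsFiniteMeasure (m x)]
    (hw : Integrable w (m x)) (hUw : ∀ᵐ y ∂m x, U y ≤ w y) :
    picardMap m l g U x ≤ ∫ y, w y ∂m x + l * g s :=
  add_le_add (integral_mono_ae (.of_mem_Icc 0 s hU.aemeasurable (ae_of_all _ hUs)) hw hUw)
    (mul_le_mul_of_nonneg_left (hgm (hUs x).2) hl)

theorem measurable_cappedPicardMap (hrw : IsRandomWalk m) (hΩ : MeasurableSet Ω)
    (hg : Measurable g) {U : X → ℝ} (hU : Measurable U) :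
    Measurable (cappedPicardMap m Ω l s g U) :=
  (measurable_const.min ((hrw.measurable_integral hU).add
    (measurable_const.mul (hg.comp hU)))).indicator hΩ

theorem cappedPicardMap_mem_Icc (hl : 0 ≤ l) (hs : 0 ≤ s) (hg : ∀ r, 0 ≤ g r) {U : X → ℝ}
    (hU : 0 ≤ U) (x : X) : cappedPicardMap m Ω l s g U x ∈ Icc 0 s := by
  by_cases hx : x ∈ Ω
  · simp only [cappedPicardMap, indicator_of_mem hx]
    exact ⟨le_min hs (add_nonneg (integral_nonneg hU) (mul_nonneg hl (hg _))), min_le_left _ _⟩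
  · simp [cappedPicardMap, hx, hs]

theorem cappedPicardMap_mono (hrw : IsRandomWalk m) (hl : 0 ≤ l) (hgm : Monotone g)
    {U V : X → ℝ} (hU : Measurable U) (hV : Measurable V) (hUs : ∀ x, U x ∈ Icc 0 s)
    (hVs : ∀ x, V x ∈ Icc 0 s) (hUV : U ≤ V) :
    cappedPicardMap m Ω l s g U ≤ cappedPicardMap m Ω l s g V := by
  intro x
  by_cases hx : x ∈ Ω
  · have := hrw.1 x
    simp only [cappedPicardMap, indicator_of_mem hx]
    exact min_le_min_left s (add_le_add
      (integral_mono (.of_mem_Icc 0 s hU.aemeasurable (ae_of_all _ hUs))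
        (.of_mem_Icc 0 s hV.aemeasurable (ae_of_all _ hVs)) hUV)
      (mul_le_mul_of_nonneg_left (hgm (hUV x)) hl))
  · simp [cappedPicardMap, hx]

theorem tendsto_cappedPicardMap (hrw : IsRandomWalk m) (hg : Continuous g) {U : ℕ → X → ℝ}
    {u : X → ℝ} (hU : ∀ k, Measurable (U k)) (hUs : ∀ k x, U k x ∈ Icc 0 s)
    (hUu : ∀ x, Tendsto (U · x) atTop (𝓝 (u x))) (x : X) :
    Tendsto (fun k ↦ cappedPicardMap m Ω l s g (U k) x) atTop
      (𝓝 (cappedPicardMap m Ω l s g u x)) := by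
  by_cases hx : x ∈ Ω
  · have := hrw.1 x
    simp only [cappedPicardMap, indicator_of_mem hx, picardMap]
    refine tendsto_const_nhds.min (.add ?_ (((hg.tendsto _).comp (hUu x)).const_mul l))
    refine tendsto_integral_of_dominated_convergence (fun _ ↦ s)
      (fun k ↦ (hU k).aestronglyMeasurable) (integrable_const s) (fun k ↦ ae_of_all _ fun y ↦ ?_)
      (ae_of_all _ hUu)
    exact abs_le.2 ⟨by linarith [(hUs k y).1, (hUs k y).2], (hUs k y).2⟩
  · simp [cappedPicardMap, hx]

theorem picardIter_succ (k : ℕ) :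
    picardIter m Ω l s g (k + 1) = cappedPicardMap m Ω l s g (picardIter m Ω l s g k) :=
  Function.iterate_succ_apply' _ _ _

theorem measurable_picardIter (hrw : IsRandomWalk m) (hΩ : MeasurableSet Ω)
    (hg : Measurable g) (k : ℕ) : Measurable (picardIter m Ω l s g k) := by
  induction k with
  | zero => exact measurable_const
  | succ k ih => rw [picardIter_succ]; exact measurable_cappedPicardMap hrw hΩ hg ih

theorem picardIter_mem_Icc (hl : 0 ≤ l) (hs : 0 ≤ s) (hg : ∀ r, 0 ≤ g r) (k : ℕ) (x : X) :
    picardIter m Ω l s g k x ∈ Icc 0 s := by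
  cases k with
  | zero => exact ⟨le_rfl, hs⟩
  | succ k =>
    rw [picardIter_succ]
    exact cappedPicardMap_mem_Icc hl hs hg (fun y ↦ (picardIter_mem_Icc hl hs hg k y).1) x

theorem monotone_picardIter (hrw : IsRandomWalk m) (hΩ : MeasurableSet Ω) (hl : 0 ≤ l)
    (hs : 0 ≤ s) (hg : Measurable g) (hgm : Monotone g) (hg0 : ∀ r, 0 ≤ g r) :
    Monotone (picardIter m Ω l s g) := by
  refine monotone_nat_of_le_succ fun k ↦ ?_
  induction k with
  | zero => exact fun x ↦ (picardIter_mem_Icc hl hs hg0 1 x).1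
  | succ k ih =>
    rw [picardIter_succ, picardIter_succ (k + 1)]
    exact cappedPicardMap_mono hrw hl hgm (measurable_picardIter hrw hΩ hg k)
      (measurable_picardIter hrw hΩ hg (k + 1)) (picardIter_mem_Icc hl hs hg0 k)
      (picardIter_mem_Icc hl hs hg0 (k + 1)) ih

theorem tendsto_picardIter (hrw : IsRandomWalk m) (hΩ : MeasurableSet Ω) (hl : 0 ≤ l)
    (hs : 0 ≤ s) (hg : Measurable g) (hgm : Monotone g) (hg0 : ∀ r, 0 ≤ g r) (x : X) :
    Tendsto (picardIter m Ω l s g · x) atTop (𝓝 (picardLimit m Ω l s g x)) :=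
  tendsto_atTop_ciSup (fun _ _ hjk ↦ monotone_picardIter hrw hΩ hl hs hg hgm hg0 hjk x)
    ⟨s, forall_mem_range.2 fun k ↦ (picardIter_mem_Icc hl hs hg0 k x).2⟩

theorem picardLimit_mem_Icc (hl : 0 ≤ l) (hs : 0 ≤ s) (hg : ∀ r, 0 ≤ g r) (x : X) :
    picardLimit m Ω l s g x ∈ Icc 0 s :=
  ⟨(picardIter_mem_Icc hl hs hg 0 x).1.trans (le_ciSup ⟨s, forall_mem_range.2 fun k ↦
      (picardIter_mem_Icc hl hs hg k x).2⟩ 0),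
    ciSup_le fun k ↦ (picardIter_mem_Icc hl hs hg k x).2⟩

theorem measurable_picardLimit (hrw : IsRandomWalk m) (hΩ : MeasurableSet Ω)
    (hg : Measurable g) : Measurable (picardLimit m Ω l s g) :=
  .iSup (measurable_picardIter hrw hΩ hg)

theorem cappedPicardMap_picardLimit (hrw : IsRandomWalk m) (hΩ : MeasurableSet Ω) (hl : 0 ≤ l)
    (hs : 0 ≤ s) (hg : Continuous g) (hgm : Monotone g) (hg0 : ∀ r, 0 ≤ g r) :
    cappedPicardMap m Ω l s g (picardLimit m Ω l s g) = picardLimit m Ω l s g := by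
  funext x
  have hlim := tendsto_picardIter hrw hΩ hl hs hg.measurable hgm hg0
  refine tendsto_nhds_unique ?_ ((hlim x).comp (tendsto_add_atTop_nat 1))
  simp only [Function.comp_def, picardIter_succ]
  exact tendsto_cappedPicardMap hrw hg (measurable_picardIter hrw hΩ hg.measurable)
    (picardIter_mem_Icc hl hs hg0) hlim x

end Picard

section Barrier

variable {X : Type*} [MeasurableSpace X] {m : X → Measure X} {ν : Measure X} {Ω : Set X}
  {l s : ℝ} {g : ℝ → ℝ}

/-- Since `w ≤ s` and `g` is monotone, `-Δ_m w ≥ l g(s) ≥ l g(w)` on `Ω`. -/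
def IsBarrier (m : X → Measure X) (ν : Measure X) (Ω : Set X) (l s : ℝ) (g : ℝ → ℝ)
    (w : X → ℝ) : Prop :=
  0 ≤ᵐ[ν] w ∧
    ∀ᵐ x ∂ν.restrict Ω, Integrable w (m x) ∧ ∫ y, w y ∂m x + l * g s ≤ w x ∧ w x ≤ s

theorem cappedPicardMap_ae_le (hrw : IsRandomWalk m) (hrev : Reversible m ν)
    (hΩ : MeasurableSet Ω) (hΩfin : ν Ω ≠ ⊤) (hl : 0 ≤ l) (hgm : Monotone g) {U w : X → ℝ}
    (hw : IsBarrier m ν Ω l s g w) (hU : Measurable U) (hUs : ∀ x, U x ∈ Icc 0 s)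
    (hUw : U ≤ᵐ[ν] w) : cappedPicardMap m Ω l s g U ≤ᵐ[ν] w := by
  filter_upwards [ae_imp_of_ae_restrict (hrev.ae_restrict_ae hrw hΩ hΩfin hUw),
    ae_imp_of_ae_restrict hw.2, hw.1] with x hxU hxw hx0
  by_cases hx : x ∈ Ω
  · simp only [cappedPicardMap, indicator_of_mem hx]
    obtain ⟨hwi, hws, -⟩ := hxw hx
    have := hrw.1 x
    exact (min_le_right _ _).trans
      ((picardMap_le_of_ae_le hl hgm hU hUs hwi (hxU hx)).trans hws)
  · simpa [cappedPicardMap, hx] using hx0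

theorem picardLimit_ae_le (hrw : IsRandomWalk m) (hrev : Reversible m ν)
    (hΩ : MeasurableSet Ω) (hΩfin : ν Ω ≠ ⊤) (hl : 0 ≤ l) (hs : 0 ≤ s) (hg : Measurable g)
    (hgm : Monotone g) (hg0 : ∀ r, 0 ≤ g r) {w : X → ℝ} (hw : IsBarrier m ν Ω l s g w) :
    picardLimit m Ω l s g ≤ᵐ[ν] w := by
  have hiter : ∀ k, picardIter m Ω l s g k ≤ᵐ[ν] w := by
    intro k
    induction k with
    | zero => exact hw.1
    | succ k ih =>
      rw [picardIter_succ]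
      exact cappedPicardMap_ae_le hrw hrev hΩ hΩfin hl hgm hw
        (measurable_picardIter hrw hΩ hg k) (picardIter_mem_Icc hl hs hg0 k) ih
  filter_upwards [ae_all_iff.2 hiter] with x hx
  exact le_of_tendsto' (tendsto_picardIter hrw hΩ hl hs hg hgm hg0 x) hx

theorem exists_solution_of_isBarrier (hrw : IsRandomWalk m) (hrev : Reversible m ν)
    (hΩ : MeasurableSet Ω) (hΩfin : ν Ω ≠ ⊤) (hl : 0 ≤ l) (hs : 0 ≤ s) (hg : Continuous g)
    (hgm : Monotone g) (hg0 : ∀ r, 0 ≤ g r) {w : X → ℝ} (hw : IsBarrier m ν Ω l s g w) :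
    ∃ u : X → ℝ, Measurable u ∧ (∀ x, u x ∈ Icc 0 s) ∧ (∀ x ∉ Ω, u x = 0) ∧
      ∀ᵐ x ∂ν.restrict Ω, -deltaM m u x = l * g (u x) := by
  set u := picardLimit m Ω l s g
  have hum : Measurable u := measurable_picardLimit hrw hΩ hg.measurable
  have hus : ∀ x, u x ∈ Icc 0 s := picardLimit_mem_Icc hl hs hg0
  have hfix : cappedPicardMap m Ω l s g u = u :=
    cappedPicardMap_picardLimit hrw hΩ hl hs hg hgm hg0
  refine ⟨u, hum, hus, fun x hx ↦ by rw [← hfix]; simp [cappedPicardMap, hx], ?_⟩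
  filter_upwards [hrev.ae_restrict_ae hrw hΩ hΩfin
      (picardLimit_ae_le hrw hrev hΩ hΩfin hl hs hg.measurable hgm hg0 hw), hw.2,
      ae_restrict_mem hΩ]
    with x hxu ⟨hwi, hws, hwx⟩ hx
  have := hrw.1 x
  have hcap : picardMap m l g u x ≤ s :=
    ((picardMap_le_of_ae_le hl hgm hum hus hwi hxu).trans hws).trans hwx
  refine deltaM_eq_of_picardMap_eq (.of_mem_Icc 0 s hum.aemeasurable (ae_of_all _ hus)) ?_
  conv_lhs => rw [← hfix]
  simp [cappedPicardMap, hx, min_eq_right hcap]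

end Barrier

theorem exists_monotone_continuous_extension {f : ℝ → ℝ} (hf : ContinuousOn f (Ici 0))
    (hmono : MonotoneOn f (Ici 0)) :
    ∃ g : ℝ → ℝ, Continuous g ∧ Monotone g ∧ (∀ r, f 0 ≤ g r) ∧ EqOn g f (Ici 0) :=
  ⟨fun r ↦ f (max r 0),
    hf.comp_continuous (continuous_id.max continuous_const) fun r ↦ le_max_right r 0,
    fun a b hab ↦ hmono (le_max_right a 0) (le_max_right b 0) (max_le_max_right 0 hab),
    fun r ↦ hmono self_mem_Ici (le_max_right r 0) (le_max_right r 0),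
    fun r hr ↦ by simp [max_eq_left (mem_Ici.1 hr)]⟩

theorem exists_pos_mul_le_of_sublinear {f : ℝ → ℝ} (hmono : MonotoneOn f (Ici 0))
    (hf0 : 0 < f 0) (hsub : ∀ n : ℕ, 0 < n → ∃ s : ℝ, 0 ≤ s ∧ f s ≤ s / n) (c : ℝ) :
    ∃ s, 0 < s ∧ c * f s ≤ s := by
  obtain ⟨s, hs0, hfs⟩ := hsub (⌈c⌉₊ + 1) (Nat.succ_pos _)
  have hn : (0 : ℝ) < (⌈c⌉₊ + 1 : ℕ) := by positivity
  have hfs0 : 0 < f s := hf0.trans_le (hmono self_mem_Ici hs0 hs0)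
  have hcn : c ≤ (⌈c⌉₊ + 1 : ℕ) := (Nat.le_ceil c).trans (by push_cast; linarith)
  rw [le_div_iff₀ hn, mul_comm] at hfs
  exact ⟨s, (mul_pos hn hfs0).trans_le hfs, (mul_le_mul_of_nonneg_right hcn hfs0.le).trans hfs⟩

section Standing

variable {X : Type*} [MeasurableSpace X] {m : X → Measure X} {ν : Measure X} {Ω : Set X}

theorem MemL20.ae_eq_zero_of_notMem {u : X → ℝ} (hu : MemL20 m ν Ω u) :
    ∀ᵐ x ∂ν, x ∉ Ω → u x = 0 := by
  filter_upwards [ae_imp_of_ae_restrict hu.2.2.1] with x hx hxΩ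
  by_cases hxb : x ∈ mBoundary m Ω
  · exact hx hxb
  · exact hu.2.2.2 x (by rintro (h | h) <;> contradiction)

theorem memL20_of_abs_le (hfin : ν (mClosure m Ω) < ⊤) (hb : MeasurableSet (mBoundary m Ω))
    {u : X → ℝ} {C : ℝ} (hu : Measurable u) (huC : ∀ x, |u x| ≤ C)
    (hu0 : ∀ x ∉ Ω, u x = 0) : MemL20 m ν Ω u := by
  have : IsFiniteMeasure (ν.restrict (mClosure m Ω)) := isFiniteMeasure_restrict.2 hfin.ne
  refine ⟨hu, .of_bound hu.aestronglyMeasurable C (ae_of_all _ huC), ?_,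
    fun x hx ↦ hu0 x fun h ↦ hx (.inl h)⟩
  filter_upwards [ae_restrict_mem hb] with x hx
  exact hu0 x hx.1

variable {lam α M : ℝ} {φ : X → ℝ}

theorem Standing.measure_ne_top (hst : Standing m ν Ω lam φ α M) : ν Ω ≠ ⊤ :=
  ((measure_mono subset_union_left).trans_lt hst.hfin).ne

/-- `-Δ_m (tφ) = λ_m t φ ≥ λ_m t α` on `Ω`, where `t = s / M` makes `tφ ≤ s`. -/
theorem Standing.isBarrier (hst : Standing m ν Ω lam φ α M) {l s : ℝ} {g : ℝ → ℝ}
    (hs : 0 ≤ s) (hgs : l * g s ≤ lam * α * (s / M)) :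
    IsBarrier m ν Ω l s g fun x ↦ s / M * φ x := by
  have hM : 0 < M := hst.halphaPos.trans_le hst.halphaM
  have ht : 0 ≤ s / M := div_nonneg hs hM.le
  refine ⟨?_, ?_⟩
  · filter_upwards [ae_imp_of_ae_restrict hst.hphiLB,
      hst.hphiMem.ae_eq_zero_of_notMem] with x hin hout
    by_cases hx : x ∈ Ω
    · exact mul_nonneg ht (hst.halphaPos.le.trans (hin hx))
    · simp [hout hx]
  filter_upwards [hst.hphiLB, hst.hphiUB, hst.heig] with x hαφ hφM heig
  have := hst.hrw.1 x
  have hφx : 0 < lam * φ x := mul_pos hst.hlamPos (hst.halphaPos.trans_le hαφ)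
  have hφi : Integrable φ (m x) :=
    integrable_of_deltaM_ne_zero (by linarith : deltaM m φ x < 0).ne
  refine ⟨hφi.const_mul _, ?_, ?_⟩
  · rw [integral_const_mul]
    have hint : ∫ y, φ y ∂m x = φ x - lam * φ x := by
      linarith [deltaM_eq_integral_sub hφi]
    nlinarith [mul_le_mul_of_nonneg_left hαφ (mul_nonneg hst.hlamPos.le ht)]
  · calc s / M * φ x ≤ s / M * M := mul_le_mul_of_nonneg_left hφM ht
      _ = s := div_mul_cancel₀ s hM.ne'

end Standing

theorem sublinear_lamStar_infinite_general
    {X : Type*} [MeasurableSpace X]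
    (m : X → MeasureTheory.Measure X) (ν : MeasureTheory.Measure X)
    (Ω : Set X) (lam : ℝ) (φ : X → ℝ) (α M : ℝ)
    (hst : Standing m ν Ω lam φ α M)
    (f : ℝ → ℝ) (hC1 : ContDiffOn ℝ 1 f (Set.Ici 0))
    (hmono : MonotoneOn f (Set.Ici 0)) (hf0 : 0 < f 0)
    (hsub : ∀ n : ℕ, 0 < n → ∃ s : ℝ, 0 ≤ s ∧ f s ≤ s / n) :
    ∀ l : ℝ, 0 < l → ∃ u : X → ℝ, IsSol m ν Ω l f u ∧ IsBdd ν (mClosure m Ω) u := by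
  intro l hl
  obtain ⟨g, hg, hgm, hfg, hgf⟩ := exists_monotone_continuous_extension hC1.continuousOn hmono
  obtain ⟨s, hs, hfs⟩ := exists_pos_mul_le_of_sublinear hmono hf0 hsub (l * M / (lam * α))
  have hgs : l * g s ≤ lam * α * (s / M) := by
    have hlamα : 0 < lam * α := mul_pos hst.hlamPos hst.halphaPos
    have hM : 0 < M := hst.halphaPos.trans_le hst.halphaM
    rw [div_mul_eq_mul_div, div_le_iff₀ hlamα] at hfs
    rw [hgf hs.le, mul_div_assoc', le_div_iff₀ hM]
    linarith
  obtain ⟨u, hum, hus, hu0, hsol⟩ := exists_solution_of_isBarrier hst.hrw hst.hrev hst.hmeasΩ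
    hst.measure_ne_top hl.le hs.le hg hgm (fun r ↦ hf0.le.trans (hfg r))
    (hst.isBarrier hs.le hgs)
  have habs : ∀ x, |u x| ≤ s := fun x ↦ abs_le.2 ⟨by linarith [(hus x).1], (hus x).2⟩
  refine ⟨u, ⟨memL20_of_abs_le hst.hfin (measurableSet_mBoundary hst.hrw hst.hmeasΩ) hum habs hu0,
    ae_of_all _ fun x ↦ (hus x).1, ?_⟩, s, ae_of_all _ habs⟩
  filter_upwards [hsol] with x hx
  rwa [← hgf (hus x).1]

/-- **Sublinear nonlinearities give `λ* = +∞`**: if `f ∈ C¹([0,∞))` is non-decreasing with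
`f(0) > 0` and for every `n ≥ 1` there is `s_n ≥ 0` with `f(s_n) ≤ s_n/n`, then for every
`λ > 0` the problem `(P(λ f))` has a bounded solution. -/
theorem sublinear_lamStar_infinite
    {X : Type*} [MeasurableSpace X] [MeasurableSpace.CountablyGenerated X]
    (m : X → MeasureTheory.Measure X) (ν : MeasureTheory.Measure X)
    (Ω : Set X) (lam : ℝ) (φ : X → ℝ) (α M : ℝ)
    (hst : Standing m ν Ω lam φ α M)
    (f : ℝ → ℝ) (hC1 : ContDiffOn ℝ 1 f (Set.Ici 0))
    (hmono : MonotoneOn f (Set.Ici 0)) (hf0 : 0 < f 0)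
    (hsub : ∀ n : ℕ, 0 < n → ∃ s : ℝ, 0 ≤ s ∧ f s ≤ s / n) :
    ∀ l : ℝ, 0 < l → ∃ u : X → ℝ, IsSol m ν Ω l f u ∧ IsBdd ν (mClosure m Ω) u :=
  sublinear_lamStar_infinite_general m ν Ω lam φ α M hst f hC1 hmono hf0 hsub
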